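/- arXiv:2111.12841 — 2 statements merged into one kernel-verified Lean document; each statement's English description precedes it below -/
import Mathlib

section
/- A Z_2-graded supercommutative ring A = A_0 ⊕ A_1 is a local ring if and only if its even part A_0 is a local (commutative) ring. -/
open DirectSum

section Aux

variable {A : Type*} [Ring A] (𝒜 : ZMod 2 → AddSubgroup A)

/-- Decomposition of `x` into even and odd parts. -/
theorem aux_sum [GradedRing 𝒜] (x : A) :
    (DirectSum.decompose 𝒜 x 0 : A) + (DirectSum.decompose 𝒜 x 1 : A) = x := by
  classical
  conv_rhs => rw [← DirectSum.sum_support_decompose 𝒜 x]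
  rw [Finset.sum_subset (Finset.subset_univ ((decompose 𝒜 x).support))
    (fun i _ hi => by
      simp only [DFinsupp.mem_support_iff, not_not] at hi
      rw [hi, ZeroMemClass.coe_zero])]
  rw [show (Finset.univ : Finset (ZMod 2)) = {0, 1} by decide]
  rw [Finset.sum_insert (by decide), Finset.sum_singleton]

/-- A degree-zero element that is a unit in `A` is a unit in `𝒜 0`. -/
theorem aux_unit [GradedRing 𝒜] (a : 𝒜 0) (h : IsUnit (a : A)) : IsUnit a := by
  obtain ⟨u, hu⟩ := h
  refine isUnit_iff_exists.2 ⟨DirectSum.decompose 𝒜 (↑u⁻¹ : A) 0, ?_, ?_⟩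
  · apply Subtype.ext
    show (a : A) * (DirectSum.decompose 𝒜 (↑u⁻¹ : A) 0 : A) = (1 : A)
    have h1 : ((DirectSum.decompose 𝒜 ((a : A) * (↑u⁻¹ : A)) ((0 : ZMod 2) + 0) : 𝒜 0) : A)
        = (a : A) * (DirectSum.decompose 𝒜 (↑u⁻¹ : A) 0 : A) :=
      DirectSum.coe_decompose_mul_add_of_left_mem 𝒜 a.2
    have h2 : (a : A) * (↑u⁻¹ : A) = 1 := by rw [← hu]; exact u.mul_inv
    rw [show ((0 : ZMod 2) + 0) = 0 from rfl, h2] at h1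
    rw [← h1, DirectSum.decompose_of_mem_same 𝒜 (SetLike.one_mem_graded 𝒜)]
  · apply Subtype.ext
    show (DirectSum.decompose 𝒜 (↑u⁻¹ : A) 0 : A) * (a : A) = (1 : A)
    have h1 : ((DirectSum.decompose 𝒜 ((↑u⁻¹ : A) * (a : A)) ((0 : ZMod 2) + 0) : 𝒜 0) : A)
        = (DirectSum.decompose 𝒜 (↑u⁻¹ : A) 0 : A) * (a : A) :=
      DirectSum.coe_decompose_mul_add_of_right_mem 𝒜 a.2
    have h2 : (↑u⁻¹ : A) * (a : A) = 1 := by rw [← hu]; exact u.inv_mul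
    rw [show ((0 : ZMod 2) + 0) = 0 from rfl, h2] at h1
    rw [← h1, DirectSum.decompose_of_mem_same 𝒜 (SetLike.one_mem_graded 𝒜)]

/-- If the "norm" `m₀² - m₁²` is invertible then `x = m₀ + m₁` is a unit. -/
theorem aux_key
    (hsuper : ∀ (i j : ZMod 2) (a b : A), a ∈ 𝒜 i → b ∈ 𝒜 j →
      a * b = (-1 : A) ^ (i.val * j.val) * (b * a))
    {x m₀ m₁ : A} (h0 : m₀ ∈ 𝒜 0) (h1 : m₁ ∈ 𝒜 1) (hx : x = m₀ + m₁)
    {c : A} (hc : c ∈ 𝒜 0) (hc1 : (m₀ * m₀ - m₁ * m₁) * c = 1) : IsUnit x := by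
  have c00 : ∀ a b : A, a ∈ 𝒜 0 → b ∈ 𝒜 0 → a * b = b * a := fun a b ha hb => by
    have h := hsuper 0 0 a b ha hb
    rwa [show ((0 : ZMod 2).val * (0 : ZMod 2).val) = 0 by decide, pow_zero, one_mul] at h
  have c01 : ∀ a b : A, a ∈ 𝒜 0 → b ∈ 𝒜 1 → a * b = b * a := fun a b ha hb => by
    have h := hsuper 0 1 a b ha hb
    rwa [show ((0 : ZMod 2).val * (1 : ZMod 2).val) = 0 by decide, pow_zero, one_mul] at h
  have e1 : (m₀ + m₁) * (m₀ - m₁) = m₀ * m₀ - m₁ * m₁ := by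
    rw [add_mul, mul_sub, mul_sub, c01 m₀ m₁ h0 h1]; abel
  have e2 : (m₀ - m₁) * (m₀ + m₁) = m₀ * m₀ - m₁ * m₁ := by
    rw [sub_mul, mul_add, mul_add, c01 m₀ m₁ h0 h1]; abel
  have hcx : c * (m₀ + m₁) = (m₀ + m₁) * c := by
    rw [mul_add, add_mul, c00 c m₀ hc h0, c01 c m₁ hc h1]
  refine isUnit_iff_exists.2 ⟨(m₀ - m₁) * c, ?_, ?_⟩
  · rw [hx, ← mul_assoc, e1, hc1]
  · rw [hx, mul_assoc, hcx, ← mul_assoc, e2, hc1]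

end Aux

/-- A `ZMod 2`-graded supercommutative ring `A = A₀ ⊕ A₁` is a local ring if and only if
its even part `A₀` is a local ring. -/
theorem stmt0 {A : Type*} [Ring A] (𝒜 : ZMod 2 → AddSubgroup A) [GradedRing 𝒜]
    (hsuper : ∀ (i j : ZMod 2) (a b : A), a ∈ 𝒜 i → b ∈ 𝒜 j →
      a * b = (-1 : A) ^ (i.val * j.val) * (b * a)) :
    IsLocalRing A ↔ IsLocalRing (𝒜 0) := by
  have c00 : ∀ a b : A, a ∈ 𝒜 0 → b ∈ 𝒜 0 → a * b = b * a := fun a b ha hb => by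
    have h := hsuper 0 0 a b ha hb
    rwa [show ((0 : ZMod 2).val * (0 : ZMod 2).val) = 0 by decide, pow_zero, one_mul] at h
  letI : CommRing (𝒜 0) :=
    { (inferInstance : Ring (𝒜 0)) with
      mul_comm := fun a b => Subtype.ext (c00 _ _ a.2 b.2) }
  constructor
  · intro hA
    haveI : Nontrivial (𝒜 0) :=
      ⟨0, 1, fun h => (zero_ne_one (α := A)) (congrArg Subtype.val h)⟩
    refine IsLocalRing.of_isUnit_or_isUnit_one_sub_self fun a => ?_
    have h := IsLocalRing.isUnit_or_isUnit_of_add_one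
      (a := (a : A)) (b := 1 - (a : A)) (by abel)
    rcases h with h | h
    · exact Or.inl (aux_unit 𝒜 a h)
    · refine Or.inr (aux_unit 𝒜 (1 - a) ?_)
      have : ((1 - a : 𝒜 0) : A) = 1 - (a : A) := by push_cast; ring_nf
      rwa [this]
  · intro h0
    haveI : Nontrivial A :=
      ⟨0, 1, fun h => (zero_ne_one (α := 𝒜 0)) (Subtype.ext h)⟩
    refine ⟨fun {a b} hab => ?_⟩
    have hb : b = 1 - a := by rw [← hab]; abel
    subst hb
    -- decompose a
    set m₀ : A := (DirectSum.decompose 𝒜 a 0 : A) with hm₀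
    set m₁ : A := (DirectSum.decompose 𝒜 a 1 : A) with hm₁
    have hm0 : m₀ ∈ 𝒜 0 := (DirectSum.decompose 𝒜 a 0).2
    have hm1 : m₁ ∈ 𝒜 1 := (DirectSum.decompose 𝒜 a 1).2
    have hxd : a = m₀ + m₁ := (aux_sum 𝒜 a).symm
    have hq : m₁ * m₁ ∈ 𝒜 0 := by
      have := SetLike.mul_mem_graded hm1 hm1
      rwa [show ((1 : ZMod 2) + 1) = 0 by decide] at this
    set P : 𝒜 0 := ⟨m₀, hm0⟩ with hP
    set Q : 𝒜 0 := ⟨m₁ * m₁, hq⟩ with hQ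
    by_cases hN₁ : IsUnit (P * P - Q)
    · left
      obtain ⟨c, hc1, _⟩ := isUnit_iff_exists.1 hN₁
      refine aux_key 𝒜 hsuper hm0 hm1 hxd c.2 ?_
      have := congrArg (Subtype.val) hc1
      exact this
    · by_cases hN₂ : IsUnit ((1 - P) * (1 - P) - Q)
      · right
        obtain ⟨c, hc1, _⟩ := isUnit_iff_exists.1 hN₂
        refine aux_key 𝒜 hsuper (sub_mem (SetLike.one_mem_graded 𝒜) hm0)
          (neg_mem hm1) (by rw [hxd]; abel) c.2 ?_
        have h' := congrArg (Subtype.val) hc1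
        have : ((1 - m₀) * (1 - m₀) - -m₁ * -m₁ : A)
            = (((1 - P) * (1 - P) - Q : 𝒜 0) : A) := by
          push_cast [hP, hQ]; rw [neg_mul_neg]
        rw [this]
        exact h'
      · exfalso
        -- both norms are nonunits in the local ring 𝒜 0
        have h2P : IsUnit ((2 : 𝒜 0) * P) := by
          rcases IsLocalRing.isUnit_or_isUnit_of_add_one
            (a := (2 : 𝒜 0) * P) (b := 1 - (2 : 𝒜 0) * P) (by ring) with h | h
          · exact h
          · exfalso
            have heq : (1 : 𝒜 0) - 2 * P = ((1 - P) * (1 - P) - Q) + (-(P * P - Q)) := by ring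
            rw [heq] at h
            rcases IsLocalRing.isUnit_or_isUnit_of_isUnit_add h with h' | h'
            · exact hN₂ h'
            · exact hN₁ (by simpa using h'.neg)
        have hu2 : IsUnit (2 : 𝒜 0) := isUnit_of_mul_isUnit_left h2P
        have huP : IsUnit P := isUnit_of_mul_isUnit_right h2P
        have hq2 : (2 : 𝒜 0) * Q = 0 := by
          apply Subtype.ext
          show (2 : A) * (m₁ * m₁) = 0
          have h := hsuper 1 1 m₁ m₁ hm1 hm1
          rw [show ((1 : ZMod 2).val * (1 : ZMod 2).val) = 1 by decide, pow_one,
            neg_one_mul] at h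
          rw [two_mul]
          nth_rewrite 2 [h]
          exact add_neg_cancel _
        have hQ0 : Q = 0 := (hu2.mul_right_eq_zero).1 hq2
        apply hN₁
        rw [hQ0, sub_zero]
        exact huP.mul huP
end

section
/- Let R be a commutative ring, L = Der(R) its module of derivations, and ω a top exterior power element in a rank-n free setting: on Ω^n = Λ^n(Hom_R(L,R)) with L free with basis ∂_1,…,∂_n, the assignment ω·X := -L_X(ω), where for ω = g·dx_1∧…∧dx_n and X = Σ X^i ∂_i one sets L_X(ω) = (Σ_i ∂_i(X^i g))·dx_1∧…∧dx_n, defines a flat right connection: L_{[X,Y]} = L_X∘L_Y - L_Y∘L_X on Ω^n, and L_{fX}(ω) = L_X(fω). -/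
/-- Algebraic Lie derivative on top forms.  Let `R` be a commutative ring containing `ℚ`
with commuting derivations `∂_1, …, ∂_n` forming a free basis of `Der(R)`.  On the rank-one
free module `Ωⁿ` with generator `dx_1 ∧ … ∧ dx_n`, the Lie derivative of `ω = g·dx₁∧…∧dxₙ`
along the vector field `X = ∑ Xⁱ ∂ᵢ` is `L_X ω = (∑ᵢ ∂ᵢ(Xⁱ g))·dx₁∧…∧dxₙ` (identified with
its coefficient below).  Then `ω · X := -L_X ω` defines a flat right connection:
`L_{[X,Y]} = L_X ∘ L_Y - L_Y ∘ L_X` and `L_{fX}(ω) = L_X(f ω)`. -/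
theorem stmt14 {R : Type*} [CommRing R] [Algebra ℚ R] {n : ℕ}
    (der : Fin n → Derivation ℚ R R)
    (hcomm : ∀ i j (r : R), der i (der j r) = der j (der i r))
    (hbasis : ∀ d : Derivation ℚ R R, ∃! c : Fin n → R, ∀ r, d r = ∑ i, c i * der i r) :
    (∀ (X Y : Fin n → R) (g : R),
      (∑ i, der i ((∑ j, (X j * der j (Y i) - Y j * der j (X i))) * g)) =
        (∑ i, der i (X i * (∑ j, der j (Y j * g)))) -
          (∑ i, der i (Y i * (∑ j, der j (X j * g))))) ∧
    (∀ (f : R) (X : Fin n → R) (g : R),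
      (∑ i, der i ((f * X i) * g)) = (∑ i, der i (X i * (f * g)))) := by
  have main : ∀ (G : Fin n → Fin n → R), (∀ i j, G i j + G j i = 0) →
      ∑ i, ∑ j, G i j = 0 := by
    intro G hG
    have h2 : (∑ i, ∑ j, G i j) + (∑ i, ∑ j, G i j) = 0 := by
      nth_rewrite 2 [Finset.sum_comm]
      rw [← Finset.sum_add_distrib]
      simp only [← Finset.sum_add_distrib]
      exact Finset.sum_eq_zero fun i _ => Finset.sum_eq_zero fun j _ => hG i j
    have h3 : (2:ℚ) • (∑ i, ∑ j, G i j) = 0 := by rw [two_smul]; exact h2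
    have := congrArg (fun x => ((2:ℚ)⁻¹) • x) h3
    simpa [smul_smul] using this
  constructor
  · intro X Y g
    have expand1 : ∀ i, der i ((∑ j, (X j * der j (Y i) - Y j * der j (X i))) * g)
        = ∑ j, (der i (X j) * der j (Y i) * g + X j * der i (der j (Y i)) * g
              + X j * der j (Y i) * der i g
              - (der i (Y j) * der j (X i) * g + Y j * der i (der j (X i)) * g
              + Y j * der j (X i) * der i g)) := by
      intro i
      rw [Finset.sum_mul, map_sum]
      refine Finset.sum_congr rfl fun j _ => ?_
      simp only [sub_mul, map_sub, Derivation.leibniz, smul_eq_mul]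
      ring
    have expand2 : ∀ (A B : Fin n → R) i, der i (A i * ∑ j, der j (B j * g))
        = ∑ j, (der i (A i) * der j (B j) * g + der i (A i) * B j * der j g
              + A i * der i (der j (B j)) * g + A i * der j (B j) * der i g
              + A i * der i (B j) * der j g + A i * B j * der i (der j g)) := by
      intro A B i
      simp only [Derivation.leibniz, smul_eq_mul, map_sum, Finset.mul_sum, ← Finset.sum_add_distrib]
      refine Finset.sum_congr rfl fun j _ => ?_
      simp only [Derivation.leibniz, map_add, smul_eq_mul]
      ring
    simp only [expand1, expand2, ← Finset.sum_sub_distrib]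
    rw [← sub_eq_zero]
    simp only [← Finset.sum_sub_distrib]
    apply main
    intro i j
    simp only [hcomm j i]
    ring
  · intro f X g
    refine Finset.sum_congr rfl fun i _ => ?_
    rw [show (f * X i) * g = X i * (f * g) by ring]
end
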